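/- Let A be a unital *-algebra, H₁ and H₂ complex Hilbert spaces, (𝒟₁, π₁) a representation of A on H₁ and (𝒟, π) a representation of A on H₁ ⊕ H₂. Let I : H₁ → H₁ ⊕ H₂, ξ ↦ (ξ, 0), be the canonical inclusion, whose Hilbert space adjoint I* is the orthogonal projection (ξ, η) ↦ ξ. The following are equivalent: (1) I is a *-intertwiner from (𝒟₁, π₁) to (𝒟, π), i.e. both I and I* are intertwiners; (2) I is an intertwiner and 𝒟 = I(𝒟₁) + (𝒟 ∩ ({0} ⊕ H₂)); (3) there exists a representation (𝒟₂, π₂) of A on H₂ such that π = π₁ ⊕ π₂, i.e. 𝒟 = {(ξ, η) : ξ ∈ 𝒟₁, η ∈ 𝒟₂} and π(a)(ξ, η) = (π₁(a)ξ, π₂(a)η) for all a ∈ A, ξ ∈ 𝒟₁, η ∈ 𝒟₂. -/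

import Mathlib

/-! If `I` is an intertwiner, `π` leaves `I(𝒟₁)` invariant, so by the symmetry
`⟪π a ζ, v⟫ = ⟪ζ, π (star a) v⟫` it also leaves invariant the vectors of `𝒟` orthogonal to
`I(𝒟₁)`, which by density of `𝒟₁` are those in `{0} ⊕ H₂`. Under the splitting (2), `π`
therefore restricts to `𝒟₂ = {η | (0, η) ∈ 𝒟}`, which is dense in `H₂` as the image of `𝒟`
under the projection; transported to `H₂`, this restriction is the summand `π₂` of (3).
The implications (3) ⇒ (1) ⇒ (2) are direct computations. -/

/-- A representation of a unital `⋆`-algebra `A` on a complex Hilbert space `H`: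
a dense subspace `dom ⊆ H` together with a unital algebra homomorphism `π` from `A` into the
endomorphisms of `dom` satisfying `⟪π a ξ, η⟫ = ⟪ξ, π (star a) η⟫`. -/
structure HilbertRep (A : Type*) [Ring A] [Algebra ℂ A] [StarRing A] [StarModule ℂ A]
    (H : Type*) [NormedAddCommGroup H] [InnerProductSpace ℂ H] where
  dom : Submodule ℂ H
  dense : Dense (dom : Set H)
  π : A → (dom →ₗ[ℂ] dom)
  π_one : π 1 = LinearMap.id
  π_mul : ∀ a b : A, π (a * b) = (π a).comp (π b)
  π_add : ∀ a b : A, π (a + b) = π a + π b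
  π_smul : ∀ (c : ℂ) (a : A), π (c • a) = c • π a
  π_star : ∀ (a : A) (ξ η : dom),
    (inner ℂ ((π a ξ : dom) : H) (η : H) : ℂ) = inner ℂ (ξ : H) ((π (star a) η : dom) : H)

variable {A : Type*} [Ring A] [Algebra ℂ A] [StarRing A] [StarModule ℂ A]
variable {H₁ H₂ : Type*} [NormedAddCommGroup H₁] [InnerProductSpace ℂ H₁] [CompleteSpace H₁]
  [NormedAddCommGroup H₂] [InnerProductSpace ℂ H₂] [CompleteSpace H₂]

/-- The canonical inclusion `H₁ → H₁ ⊕ H₂`, `ξ ↦ (ξ, 0)`. -/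
noncomputable def inlH (ξ : H₁) : WithLp 2 (H₁ × H₂) := (WithLp.equiv 2 (H₁ × H₂)).symm (ξ, 0)

/-- The orthogonal projection `H₁ ⊕ H₂ → H₁`, `(ξ, η) ↦ ξ`; it is the Hilbert space adjoint of
the canonical inclusion `inlH`. -/
noncomputable def fstH (x : WithLp 2 (H₁ × H₂)) : H₁ := (WithLp.equiv 2 (H₁ × H₂) x).1

/-- The projection to the second coordinate `H₁ ⊕ H₂ → H₂`. -/
noncomputable def sndH (x : WithLp 2 (H₁ × H₂)) : H₂ := (WithLp.equiv 2 (H₁ × H₂) x).2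

variable (ρ₁ : HilbertRep A H₁) (ρ : HilbertRep A (WithLp 2 (H₁ × H₂)))

/-- (1): the canonical inclusion `I : H₁ → H₁ ⊕ H₂` is a `⋆`-intertwiner from `π₁` to `π`,
i.e. both `I` and its adjoint `I*` (the projection onto `H₁`) are intertwiners. -/
def IsStarIntertwinerInl : Prop :=
  (∀ ξ : ρ₁.dom, ∃ ζ : ρ.dom, (ζ : WithLp 2 (H₁ × H₂)) = inlH (ξ : H₁) ∧
    ∀ a : A, ((ρ.π a ζ : ρ.dom) : WithLp 2 (H₁ × H₂)) = inlH ((ρ₁.π a ξ : ρ₁.dom) : H₁)) ∧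
  (∀ ζ : ρ.dom, ∃ ξ : ρ₁.dom, (ξ : H₁) = fstH (ζ : WithLp 2 (H₁ × H₂)) ∧
    ∀ a : A, ((ρ₁.π a ξ : ρ₁.dom) : H₁) = fstH ((ρ.π a ζ : ρ.dom) : WithLp 2 (H₁ × H₂)))

/-- (2): the canonical inclusion is an intertwiner and `𝒟 = I(𝒟₁) + (𝒟 ∩ ({0} ⊕ H₂))`. -/
def IsIntertwinerAndSplits : Prop :=
  (∀ ξ : ρ₁.dom, ∃ ζ : ρ.dom, (ζ : WithLp 2 (H₁ × H₂)) = inlH (ξ : H₁) ∧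
    ∀ a : A, ((ρ.π a ζ : ρ.dom) : WithLp 2 (H₁ × H₂)) = inlH ((ρ₁.π a ξ : ρ₁.dom) : H₁)) ∧
  (∀ ζ : ρ.dom, ∃ (ξ : ρ₁.dom) (η : WithLp 2 (H₁ × H₂)), η ∈ ρ.dom ∧ fstH η = 0 ∧
    (ζ : WithLp 2 (H₁ × H₂)) = inlH (ξ : H₁) + η)

/-- (3): `π` is the direct sum of `π₁` and a representation `π₂` of `A` on `H₂`. -/
def IsDirectSum : Prop :=
  ∃ ρ₂ : HilbertRep A H₂,
    (∀ x : WithLp 2 (H₁ × H₂), x ∈ ρ.dom ↔ (fstH x ∈ ρ₁.dom ∧ sndH x ∈ ρ₂.dom)) ∧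
    ∀ (a : A) (ζ : ρ.dom) (ξ : ρ₁.dom) (η : ρ₂.dom),
      (ζ : WithLp 2 (H₁ × H₂)) = (WithLp.equiv 2 (H₁ × H₂)).symm ((ξ : H₁), (η : H₂)) →
      ((ρ.π a ζ : ρ.dom) : WithLp 2 (H₁ × H₂)) =
        (WithLp.equiv 2 (H₁ × H₂)).symm
          (((ρ₁.π a ξ : ρ₁.dom) : H₁), ((ρ₂.π a η : ρ₂.dom) : H₂))

namespace HilbertRep

variable {H H' : Type*} [NormedAddCommGroup H] [InnerProductSpace ℂ H]
  [NormedAddCommGroup H'] [InnerProductSpace ℂ H']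

noncomputable def ofIsometricIntertwiner (ρ : HilbertRep A H) (D : Submodule ℂ H')
    (hD : Dense (D : Set H')) (π : A → D →ₗ[ℂ] D) (J : D →ₗ[ℂ] ρ.dom)
    (hJ : ∀ x y : D, inner ℂ ((J x : ρ.dom) : H) (J y : H) = inner ℂ (x : H') (y : H'))
    (hπ : ∀ a x, J (π a x) = ρ.π a (J x)) : HilbertRep A H' :=
  have hinj : Function.Injective J := (injective_iff_map_eq_zero J).2 fun x hx => by
    simpa [hx] using (hJ x x).symm
  { dom := D
    dense := hD
    π := π
    π_one := LinearMap.ext fun x => hinj (by rw [hπ, ρ.π_one]; rfl)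
    π_mul := fun a b => LinearMap.ext fun x => hinj (by simp [hπ, ρ.π_mul])
    π_add := fun a b => LinearMap.ext fun x => hinj (by simp [hπ, ρ.π_add])
    π_smul := fun c a => LinearMap.ext fun x => hinj (by simp [hπ, ρ.π_smul])
    π_star := fun a x y => by rw [← hJ, hπ, ρ.π_star, ← hπ, hJ] }

end HilbertRep

section DirectSum

variable {H₁ H₂ : Type*}

@[simp] lemma fstH_apply (x : WithLp 2 (H₁ × H₂)) : fstH x = x.fst := rfl

@[simp] lemma sndH_apply (x : WithLp 2 (H₁ × H₂)) : sndH x = x.snd := rfl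

@[simp] lemma inlH_apply [NormedAddCommGroup H₂] (ξ : H₁) :
    (inlH ξ : WithLp 2 (H₁ × H₂)) = WithLp.toLp 2 (ξ, 0) := rfl

lemma WithLp.prod_ext {x y : WithLp 2 (H₁ × H₂)} (h₁ : x.fst = y.fst) (h₂ : x.snd = y.snd) :
    x = y :=
  (WithLp.equiv 2 (H₁ × H₂)).injective (Prod.ext h₁ h₂)

variable [NormedAddCommGroup H₁] [InnerProductSpace ℂ H₁]
  [NormedAddCommGroup H₂] [InnerProductSpace ℂ H₂]

noncomputable def inrH : H₂ →ₗ[ℂ] WithLp 2 (H₁ × H₂) :=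
  (WithLp.linearEquiv 2 ℂ (H₁ × H₂)).symm.toLinearMap ∘ₗ LinearMap.inr ℂ H₁ H₂

@[simp] lemma inrH_apply (η : H₂) : (inrH η : WithLp 2 (H₁ × H₂)) = WithLp.toLp 2 (0, η) := rfl

lemma toLp_eq_inlH_add_inrH (ξ : H₁) (η : H₂) :
    WithLp.toLp 2 (ξ, η) = inlH ξ + inrH η :=
  WithLp.prod_ext (by simp) (by simp)

lemma inrH_snd_of_fst_eq_zero {x : WithLp 2 (H₁ × H₂)} (hx : x.fst = 0) : inrH x.snd = x :=
  WithLp.prod_ext (by simp [hx]) (by simp)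

lemma inner_inlH_right (x : WithLp 2 (H₁ × H₂)) (ξ : H₁) :
    inner ℂ x (inlH ξ) = inner ℂ x.fst ξ := by
  simp

lemma inner_inrH_inrH (η η' : H₂) :
    inner ℂ (inrH η : WithLp 2 (H₁ × H₂)) (inrH η') = inner ℂ η η' := by
  simp

variable (ρ₁ : HilbertRep A H₁) (ρ : HilbertRep A (WithLp 2 (H₁ × H₂)))

def InlIntertwines : Prop :=
  ∀ ξ : ρ₁.dom, ∃ ζ : ρ.dom, (ζ : WithLp 2 (H₁ × H₂)) = inlH (ξ : H₁) ∧
    ∀ a : A, ((ρ.π a ζ : ρ.dom) : WithLp 2 (H₁ × H₂)) = inlH ((ρ₁.π a ξ : ρ₁.dom) : H₁)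

noncomputable def complementDom : Submodule ℂ H₂ := ρ.dom.comap inrH

noncomputable def inrDom : complementDom ρ →ₗ[ℂ] ρ.dom :=
  (inrH ∘ₗ (complementDom ρ).subtype).codRestrict ρ.dom fun η => η.2

variable {ρ₁ ρ}

@[simp] lemma coe_inrDom (η : complementDom ρ) :
    (inrDom ρ η : WithLp 2 (H₁ × H₂)) = inrH (η : H₂) := rfl

lemma inner_inrDom (η η' : complementDom ρ) :
    inner ℂ (inrDom ρ η : WithLp 2 (H₁ × H₂)) (inrDom ρ η' : WithLp 2 (H₁ × H₂)) =
      inner ℂ (η : H₂) (η' : H₂) :=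
  inner_inrH_inrH _ _

namespace InlIntertwines

lemma inlH_mem (h : InlIntertwines ρ₁ ρ) (ξ : ρ₁.dom) : inlH (ξ : H₁) ∈ ρ.dom := by
  obtain ⟨ζ, hζ, -⟩ := h ξ
  exact hζ ▸ ζ.2

lemma π_inlH (h : InlIntertwines ρ₁ ρ) (a : A) (ξ : ρ₁.dom) :
    ((ρ.π a ⟨inlH (ξ : H₁), h.inlH_mem ξ⟩ : ρ.dom) : WithLp 2 (H₁ × H₂)) =
      inlH ((ρ₁.π a ξ : ρ₁.dom) : H₁) := by
  obtain ⟨ζ, hζ, hπ⟩ := h ξ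
  obtain rfl : ζ = ⟨inlH (ξ : H₁), h.inlH_mem ξ⟩ := Subtype.ext hζ
  exact hπ a

lemma fst_π_eq_zero (h : InlIntertwines ρ₁ ρ) (a : A) {ζ : ρ.dom}
    (hζ : (ζ : WithLp 2 (H₁ × H₂)).fst = 0) :
    ((ρ.π a ζ : ρ.dom) : WithLp 2 (H₁ × H₂)).fst = 0 := by
  refine ρ₁.dense.eq_zero_of_inner_left ℂ fun v hv => ?_
  lift v to ρ₁.dom using hv
  calc inner ℂ ((ρ.π a ζ : ρ.dom) : WithLp 2 (H₁ × H₂)).fst (v : H₁)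
      = inner ℂ ((ρ.π a ζ : ρ.dom) : WithLp 2 (H₁ × H₂)) (inlH (v : H₁)) :=
        (inner_inlH_right _ _).symm
    _ = inner ℂ (ζ : WithLp 2 (H₁ × H₂))
          ((ρ.π (star a) ⟨inlH (v : H₁), h.inlH_mem v⟩ : ρ.dom) : WithLp 2 (H₁ × H₂)) :=
        ρ.π_star a ζ ⟨inlH (v : H₁), h.inlH_mem v⟩
    _ = 0 := by rw [h.π_inlH, inner_inlH_right, hζ, inner_zero_left]

noncomputable def complementπ (h : InlIntertwines ρ₁ ρ) (a : A) :
    complementDom ρ →ₗ[ℂ] complementDom ρ :=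
  (WithLp.sndₗ 2 ℂ H₁ H₂ ∘ₗ ρ.dom.subtype ∘ₗ ρ.π a ∘ₗ inrDom ρ).codRestrict (complementDom ρ)
    fun η => by
      show inrH ((ρ.π a (inrDom ρ η) : ρ.dom) : WithLp 2 (H₁ × H₂)).snd ∈ ρ.dom
      rw [inrH_snd_of_fst_eq_zero (h.fst_π_eq_zero a (by simp))]
      exact Submodule.coe_mem _

lemma inrDom_complementπ (h : InlIntertwines ρ₁ ρ) (a : A) (η : complementDom ρ) :
    inrDom ρ (h.complementπ a η) = ρ.π a (inrDom ρ η) :=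
  Subtype.ext (inrH_snd_of_fst_eq_zero (h.fst_π_eq_zero a (by simp)))

end InlIntertwines

namespace IsIntertwinerAndSplits

lemma mem_dom_iff (h : IsIntertwinerAndSplits ρ₁ ρ) (x : WithLp 2 (H₁ × H₂)) :
    x ∈ ρ.dom ↔ x.fst ∈ ρ₁.dom ∧ x.snd ∈ complementDom ρ := by
  refine ⟨fun hx => ?_, fun ⟨hx₁, hx₂⟩ => ?_⟩
  · obtain ⟨ξ, η, hη, hη₁, hx⟩ := h.2 ⟨x, hx⟩
    simp only [fstH_apply] at hη₁
    obtain rfl : x = inlH (ξ : H₁) + η := hx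
    refine ⟨by simp [hη₁], ?_⟩
    show inrH _ ∈ ρ.dom
    simpa [hη₁, inrH_snd_of_fst_eq_zero hη₁] using hη
  · rw [show x = inlH x.fst + inrH x.snd from WithLp.prod_ext (by simp) (by simp)]
    exact ρ.dom.add_mem (InlIntertwines.inlH_mem h.1 ⟨_, hx₁⟩) hx₂

lemma complementDom_dense (h : IsIntertwinerAndSplits ρ₁ ρ) :
    Dense (complementDom ρ : Set H₂) := by
  have hsurj : Function.Surjective (WithLp.snd : WithLp 2 (H₁ × H₂) → H₂) :=
    fun η => ⟨inrH η, rfl⟩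
  refine (hsurj.denseRange.dense_image (WithLp.continuous_snd 2 H₁ H₂) ρ.dense).mono ?_
  rintro _ ⟨x, hx, rfl⟩
  exact ((h.mem_dom_iff x).1 hx).2

noncomputable def complementRep (h : IsIntertwinerAndSplits ρ₁ ρ) : HilbertRep A H₂ :=
  ρ.ofIsometricIntertwiner (complementDom ρ) h.complementDom_dense
    (InlIntertwines.complementπ h.1) (inrDom ρ) inner_inrDom
    (InlIntertwines.inrDom_complementπ h.1)

lemma isDirectSum (h : IsIntertwinerAndSplits ρ₁ ρ) : IsDirectSum ρ₁ ρ := by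
  refine ⟨h.complementRep, h.mem_dom_iff, fun a ζ ξ η hζ => ?_⟩
  obtain rfl : ζ = ⟨inlH (ξ : H₁), InlIntertwines.inlH_mem h.1 ξ⟩ + inrDom ρ η :=
    Subtype.ext (by rw [hζ, WithLp.equiv_symm_apply, toLp_eq_inlH_add_inrH]; rfl)
  rw [map_add, Submodule.coe_add, InlIntertwines.π_inlH h.1,
    ← InlIntertwines.inrDom_complementπ h.1 a η, coe_inrDom,
    WithLp.equiv_symm_apply, toLp_eq_inlH_add_inrH]
  rfl

end IsIntertwinerAndSplits

lemma IsStarIntertwinerInl.isIntertwinerAndSplits (h : IsStarIntertwinerInl ρ₁ ρ) :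
    IsIntertwinerAndSplits ρ₁ ρ := by
  refine ⟨h.1, fun ζ => ?_⟩
  obtain ⟨ξ, hξ, -⟩ := h.2 ζ
  obtain ⟨ζ₁, hζ₁, -⟩ := h.1 ξ
  refine ⟨ξ, ζ - ζ₁, ρ.dom.sub_mem ζ.2 ζ₁.2, by simp [hζ₁, hξ], by simp [hζ₁]⟩

lemma IsDirectSum.isStarIntertwinerInl (h : IsDirectSum ρ₁ ρ) : IsStarIntertwinerInl ρ₁ ρ := by
  obtain ⟨ρ₂, hdom, hπ⟩ := h
  refine ⟨fun ξ => ?_, fun ζ => ?_⟩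
  · have hξ : inlH (ξ : H₁) ∈ ρ.dom := (hdom _).2 ⟨by simp, by simp⟩
    refine ⟨⟨_, hξ⟩, rfl, fun a => ?_⟩
    simpa using hπ a ⟨_, hξ⟩ ξ 0 (by simp)
  · obtain ⟨hζ₁, hζ₂⟩ := (hdom ζ).1 ζ.2
    exact ⟨⟨_, hζ₁⟩, rfl, fun a => by simp [hπ a ζ ⟨_, hζ₁⟩ ⟨_, hζ₂⟩ rfl]⟩

end DirectSum

theorem inclusion_star_intertwiner_iff :
    (IsStarIntertwinerInl ρ₁ ρ ↔ IsDirectSum ρ₁ ρ) ∧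
    (IsIntertwinerAndSplits ρ₁ ρ ↔ IsDirectSum ρ₁ ρ) :=
  ⟨⟨fun h => h.isIntertwinerAndSplits.isDirectSum, IsDirectSum.isStarIntertwinerInl⟩,
    ⟨IsIntertwinerAndSplits.isDirectSum,
      fun h => h.isStarIntertwinerInl.isIntertwinerAndSplits⟩⟩
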